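/- The relation ≤_{T(tu)} is invariant under weak truth-table equivalence: if A ≤_{wtt} E and E ≤_{T(tu)} B then A ≤_{T(tu)} B; and if A ≤_{T(tu)} E and E ≤_{wtt} B then A ≤_{T(tu)} B. -/

import Mathlib

open scoped Classical
open Filter

/-- The prefix of length `n` of a set (element of Cantor space), as a binary string. -/
def opre (B : ℕ → Bool) (n : ℕ) : List Bool := (List.range n).map B

/-- An order function: computable, nondecreasing and unbounded. -/
def IsOrder (f : ℕ → ℕ) : Prop := Computable f ∧ Monotone f ∧ ∀ m, ∃ n, m ≤ f n

/-- The discrete inverse of a nondecreasing unbounded function: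
`discInv f k` is the greatest `n` with `f n ≤ k`. -/
noncomputable def discInv (f : ℕ → ℕ) (k : ℕ) : ℕ := sSup {n | f n ≤ k}

/-- There is a Turing reduction computing the function `f` from the set oracle `B`
whose use on input `n` is bounded by `u n`: a monotone partial computable
string functional which computes `f n` from the prefix `B↾(u n)`. -/
def RedUse (f : ℕ → ℕ) (B : ℕ → Bool) (u : ℕ → ℕ) : Prop :=
  ∃ F : List Bool → ℕ →. ℕ, Partrec₂ F ∧
    (∀ (σ τ : List Bool) (n y : ℕ), σ <+: τ → y ∈ F σ n → y ∈ F τ n) ∧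
    ∀ n, f n ∈ F (opre B (u n)) n

/-- A set, viewed as a `ℕ`-valued function. -/
def natOf (A : ℕ → Bool) : ℕ → ℕ := fun n => cond (A n) 1 0

/-- Turing reduction of the set `A` to the set `B` with use bounded by `u`. -/
def SRedUse (A B : ℕ → Bool) (u : ℕ → ℕ) : Prop := RedUse (natOf A) B u

/-- Turing reducibility of a function to a set. -/
def TRed (f : ℕ → ℕ) (B : ℕ → Bool) : Prop := ∃ u, RedUse f B u

/-- Weak truth-table reducibility of a function to a set: the use is computably bounded. -/
def WttRed (f : ℕ → ℕ) (B : ℕ → Bool) : Prop := ∃ u, Computable u ∧ RedUse f B u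

/-- Weak truth-table reducibility between sets. -/
def SWttRed (A B : ℕ → Bool) : Prop := WttRed (natOf A) B

/-- `A` is reducible to `B` with tiny use: for every order function `h` there is
a Turing reduction of `A` to `B` with use bounded by `h`. -/
def TtuRed (A B : ℕ → Bool) : Prop := ∀ h, IsOrder h → SRedUse A B h

/-- `A` is uniformly reducible to `B` with tiny use: a single Turing reduction of
`A` to `B` whose use function is dominated by every order function. -/
def UTtuRed (A B : ℕ → Bool) : Prop :=
  ∃ u : ℕ → ℕ, (∀ h, IsOrder h → ∀ᶠ n in atTop, u n ≤ h n) ∧ SRedUse A B u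

/-- The effective join of two sets. -/
def join (A B : ℕ → Bool) : ℕ → Bool := fun n => if n % 2 = 0 then A (n / 2) else B (n / 2)

/-- The halting set `K = {e : φ_e(e)↓}`. -/
noncomputable def Khalt : ℕ → Bool := fun e =>
  decide (((Denumerable.ofNat Nat.Partrec.Code e).eval e).Dom)

/-- `U` is an optimal machine (for plain Kolmogorov complexity on binary strings). -/
def Optimal (U : List Bool →. List Bool) : Prop :=
  Partrec U ∧ ∀ M : List Bool →. List Bool, Partrec M →
    ∃ c, ∀ (p x : List Bool), x ∈ M p → ∃ q : List Bool, q.length ≤ p.length + c ∧ x ∈ U q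

/-- Plain Kolmogorov complexity of a string relative to the machine `U`. -/
noncomputable def Cplx (U : List Bool →. List Bool) (x : List Bool) : ℕ :=
  sInf { k | ∃ p : List Bool, p.length = k ∧ x ∈ U p }

/-- Kolmogorov complexity of a natural number (coded as a binary string). -/
noncomputable def CplxN (U : List Bool →. List Bool) (n : ℕ) : ℕ := Cplx U (Nat.bits n)

/-- `A` is anti-complex: for every order function `f`, `C(A↾f(n)) ≤ n` for almost all `n`. -/
def AntiComplex (U : List Bool →. List Bool) (A : ℕ → Bool) : Prop :=
  ∀ f, IsOrder f → ∀ᶠ n in atTop, Cplx U (opre A (f n)) ≤ n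

/-- `g_A(k)` is the least `n` such that `C(A↾m) > k` for all `m ≥ n`. -/
noncomputable def gA (U : List Bool →. List Bool) (A : ℕ → Bool) (k : ℕ) : ℕ :=
  sInf {n | ∀ m, n ≤ m → k < Cplx U (opre A m)}

/-- Coding of binary strings by natural numbers, ordered by length first. -/
def strToNat (l : List Bool) : ℕ := l.foldl (fun a b => 2 * a + cond b 1 0) 1 - 1

/-- The least `U`-description of the string `x`, as a natural number. -/
noncomputable def leastDesc (U : List Bool →. List Bool) (x : List Bool) : ℕ :=
  sInf {m | ∃ p : List Bool, strToNat p = m ∧ x ∈ U p}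

/-- The set `A* = {(A↾g_A(k))* : k ∈ ℕ}` of least descriptions of the segments `A↾g_A(k)`. -/
noncomputable def Astar (U : List Bool →. List Bool) (A : ℕ → Bool) : ℕ → Bool :=
  fun m => decide (∃ k, m = leastDesc U (opre A (gA U A k)))

/-- A c.e. trace for `f` bounded by `h`: a uniformly c.e. sequence of finite sets
`T n` with `f n ∈ T n` and `|T n| ≤ h n`. -/
def CeTrace (h f : ℕ → ℕ) : Prop :=
  ∃ S : ℕ → ℕ → Prop, REPred (fun p : ℕ × ℕ => S p.1 p.2) ∧
    ∀ n, S n (f n) ∧ { y | S n y }.Finite ∧ Set.ncard { y | S n y } ≤ h n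

/-- The wtt-degree of `A` is r.e. traceable. -/
def ReTraceableWtt (A : ℕ → Bool) : Prop :=
  ∃ h, IsOrder h ∧ ∀ f : ℕ → ℕ, WttRed f A → CeTrace h f

/-- A computable trace for `f` bounded by `h` (finite sets given by canonical indices,
here: by computable lists). -/
def CompTrace (h f : ℕ → ℕ) : Prop :=
  ∃ T : ℕ → List ℕ, Computable T ∧ ∀ n, f n ∈ T n ∧ (T n).length ≤ h n

/-- Truth-table reducibility of a function to a set: a total computable functional
with computably bounded use. -/
def TtRed (f : ℕ → ℕ) (A : ℕ → Bool) : Prop :=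
  ∃ u : ℕ → ℕ, Computable u ∧ ∃ F : List Bool → ℕ → ℕ, Computable₂ F ∧
    ∀ n, F (opre A (u n)) n = f n

/-- `A` is Schnorr trivial (via the Franklin–Stephan characterisation:
its truth-table degree is computably traceable). -/
def SchnorrTrivial (A : ℕ → Bool) : Prop :=
  ∃ h, IsOrder h ∧ ∀ f : ℕ → ℕ, TtRed f A → CompTrace h f

/-- `A` is truth-table reducible to `B` with tiny use: for every order function `h`
there is a total computable functional computing `A` from `B` with use bounded by `h`. -/
def TttuRed (A B : ℕ → Bool) : Prop :=
  ∀ h, IsOrder h → ∃ F : List Bool → ℕ → Bool, Computable₂ F ∧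
    ∀ n, F (opre B (h n)) n = A n

/-- `g` dominates every computable function. -/
def Dominant (g : ℕ → ℕ) : Prop :=
  ∀ f : ℕ → ℕ, Computable f → ∀ᶠ n in atTop, f n ≤ g n

/-- Prefix of a function oracle. -/
def fpre (f : ℕ → ℕ) (n : ℕ) : List ℕ := (List.range n).map f

/-- Reduction of a set `A` to a function oracle `f` with use bounded by `u`. -/
def RedUseFn (A : ℕ → Bool) (f : ℕ → ℕ) (u : ℕ → ℕ) : Prop :=
  ∃ F : List ℕ → ℕ →. ℕ, Partrec₂ F ∧
    (∀ (σ τ : List ℕ) (n y : ℕ), σ <+: τ → y ∈ F σ n → y ∈ F τ n) ∧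
    ∀ n, natOf A n ∈ F (fpre f (u n)) n

/-- Uniform reducibility with tiny use to a function oracle. -/
def UTtuRedFn (A : ℕ → Bool) (f : ℕ → ℕ) : Prop :=
  ∃ u : ℕ → ℕ, (∀ h, IsOrder h → ∀ᶠ n in atTop, u n ≤ h n) ∧ RedUseFn A f u

/-- The graph of `f`, coded as a set via the standard pairing. -/
def graphOf (f : ℕ → ℕ) : ℕ → Bool :=
  fun m => decide (f (Nat.unpair m).1 = (Nat.unpair m).2)

/-- The real number with binary expansion `X`. -/
noncomputable def realOf (X : ℕ → Bool) : ℝ := ∑' n, cond (X n) (((2:ℝ) ^ (n + 1))⁻¹) 0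

/-- `X` is a left-c.e. real. -/
def LeftCE (X : ℕ → Bool) : Prop :=
  ∃ q : ℕ → ℚ, Computable q ∧ Monotone q ∧
    Tendsto (fun n => (q n : ℝ)) atTop (nhds (realOf X))

/-- `X` is Martin-Löf random: it passes every Martin-Löf test (given as a uniformly
c.e. sequence of sets of strings of measure at most `2^{-n}`). -/
def MLRandom (X : ℕ → Bool) : Prop :=
  ∀ W : ℕ → List Bool → Prop,
    REPred (fun p : ℕ × List Bool => W p.1 p.2) →
    (∀ n, ∑' σ : {σ : List Bool // W n σ}, ((2:ℝ) ^ (σ : List Bool).length)⁻¹ ≤ ((2:ℝ) ^ n)⁻¹) →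
    ∃ n, ∀ σ, W n σ → opre X σ.length ≠ σ

/-- `A` is a c.e. set. -/
def CeSet (A : ℕ → Bool) : Prop := REPred (fun n => A n = true)

/-! If `A(n)` is computed from `E↾v(n)` and each `E(m)` from `B↾u(m)`, then composing the two
reductions computes `A(n)` from `B↾max_{m < v(n)} u(m)`. So for a given order `h` it suffices to
choose the order `g` of the tiny-use reduction such that this maximum stays below `h(n)`, which a
computable `v` resp. `u` allows: for `E ≤_{T(tu)} B` take `g(m) = h(least n with m < v(n))`, for
`A ≤_{T(tu)} E` take `g(n)` largest with `u(m) ≤ h(n)` for all `m < g(n)` (with `v` and `u`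
replaced by their running maxima). -/

lemma opre_prefix (B : ℕ → Bool) {m n : ℕ} (h : m ≤ n) : opre B m <+: opre B n := by
  rw [show opre B m = (opre B n).take m by
    simp [opre, ← List.map_take, List.take_range, Nat.min_eq_left h]]
  exact List.take_prefix _ _

lemma opre_succ (B : ℕ → Bool) (n : ℕ) : opre B (n + 1) = opre B n ++ [B n] := by
  simp [opre, List.range_succ]

lemma decide_natOf_eq_one (E : ℕ → Bool) (m : ℕ) : decide (natOf E m = 1) = E m := by
  cases h : E m <;> simp [natOf, h]

section Decode

/-- Queries `G σ` at `0, …, k - 1` and reads the answers as bits: when `G` computes `natOf E`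
from `σ` there, the result is `E↾k`. -/
def decodePrefix (G : List Bool → ℕ →. ℕ) (σ : List Bool) : ℕ → Part (List Bool)
  | 0 => Part.some []
  | k + 1 => (decodePrefix G σ k).bind fun l => (G σ k).map fun z => l ++ [decide (z = 1)]

variable {G : List Bool → ℕ →. ℕ}

lemma opre_mem_decodePrefix {E : ℕ → Bool} {σ : List Bool} {k : ℕ}
    (hG : ∀ m < k, natOf E m ∈ G σ m) : opre E k ∈ decodePrefix G σ k := by
  induction k with
  | zero => simp [decodePrefix, opre]
  | succ k ih =>
    rw [opre_succ]
    refine Part.mem_bind_iff.mpr ⟨_, ih fun m hm => hG m (hm.trans k.lt_succ_self), ?_⟩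
    exact (Part.mem_map_iff _).mpr ⟨natOf E k, hG k k.lt_succ_self, by rw [decide_natOf_eq_one]⟩

lemma decodePrefix_mono (hG : ∀ (σ τ : List Bool) (n y : ℕ), σ <+: τ → y ∈ G σ n → y ∈ G τ n)
    {σ τ : List Bool} (hστ : σ <+: τ) {k : ℕ} {l : List Bool} (hl : l ∈ decodePrefix G σ k) :
    l ∈ decodePrefix G τ k := by
  induction k generalizing l with
  | zero => exact hl
  | succ k ih =>
    obtain ⟨l', hl', hmap⟩ := Part.mem_bind_iff.mp hl
    obtain ⟨z, hz, rfl⟩ := (Part.mem_map_iff _).mp hmap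
    exact Part.mem_bind_iff.mpr ⟨l', ih hl', (Part.mem_map_iff _).mpr ⟨z, hG _ _ _ _ hστ hz, rfl⟩⟩

lemma partrec₂_decodePrefix (hG : Partrec₂ G) :
    Partrec₂ (decodePrefix G) := by
  have hstep : Partrec₂ fun (a : List Bool × ℕ) (p : ℕ × List Bool) =>
      (G a.1 p.1).map fun z => p.2 ++ [decide (z = 1)] := by
    have hbit : Computable fun y : ((List Bool × ℕ) × (ℕ × List Bool)) × ℕ => decide (y.2 = 1) :=
      (Primrec₂.to_comp Primrec.eq.decide).comp Computable.snd (Computable.const 1)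
    exact ((hG.comp (Computable.fst.comp Computable.fst) (Computable.fst.comp Computable.snd)).map
      (Computable.list_append.comp (Computable.snd.comp (Computable.snd.comp Computable.fst))
        (Computable.list_cons.comp hbit (Computable.const []))).to₂).to₂
  refine Partrec.of_eq (Partrec.nat_rec Computable.snd (Partrec.const' (Part.some [])) hstep)
    fun ⟨σ, k⟩ => ?_
  induction k with
  | zero => rfl
  | succ k ih => simp only [decodePrefix, ← ih]

end Decode

lemma RedUse.comp {f : ℕ → ℕ} {E B : ℕ → Bool} {v u h : ℕ → ℕ}
    (hfE : RedUse f E v) (hv : Computable v) (hEB : SRedUse E B u)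
    (huse : ∀ n m, m < v n → u m ≤ h n) : RedUse f B h := by
  obtain ⟨F, hF, hFmono, hFf⟩ := hfE
  obtain ⟨G, hG, hGmono, hGE⟩ := hEB
  refine ⟨fun σ n => (decodePrefix G σ (v n)).bind fun τ => F τ n, ?_, ?_, fun n => ?_⟩
  · exact (((partrec₂_decodePrefix hG).comp Computable.fst (hv.comp Computable.snd)).bind
      (hF.comp Computable.snd (Computable.snd.comp Computable.fst)).to₂).to₂
  · intro σ τ n y hστ hy
    obtain ⟨l, hl, hyl⟩ := Part.mem_bind_iff.mp hy
    exact Part.mem_bind_iff.mpr ⟨l, decodePrefix_mono hGmono hστ hl, hyl⟩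
  · refine Part.mem_bind_iff.mpr ⟨opre E (v n), opre_mem_decodePrefix fun m hm => ?_, hFf n⟩
    exact hGmono _ _ _ _ (opre_prefix B (huse n m hm)) (hGE m)

lemma computable_partialSups {u : ℕ → ℕ} (hu : Computable u) : Computable (partialSups u) := by
  refine (Computable.nat_rec Computable.id (hu.comp (Computable.const 0))
    ((Primrec₂.to_comp Primrec.nat_max).comp (Computable.snd.comp Computable.snd)
      (hu.comp (Computable.succ.comp (Computable.fst.comp Computable.snd)))).to₂).of_eq fun n => ?_
  induction n with
  | zero => simp
  | succ n ih => simp [← ih]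

section SublevelCount

def sublevelCount (W : ℕ → ℕ) (x N : ℕ) : ℕ := Nat.count (fun k => W k ≤ x) N

variable {W : ℕ → ℕ}

lemma sublevelCount_mono {x x' N N' : ℕ} (hx : x ≤ x') (hN : N ≤ N') :
    sublevelCount W x N ≤ sublevelCount W x' N' :=
  (Nat.count_mono_left fun _ _ hk => hk.trans hx).trans (Nat.count_monotone _ hN)

lemma le_sublevelCount {x M N : ℕ} (hW : ∀ k < M, W k ≤ x) (hMN : M ≤ N) :
    M ≤ sublevelCount W x N :=
  calc M = sublevelCount W x M := (Nat.count_iff_forall.mpr hW).symm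
    _ ≤ sublevelCount W x N := Nat.count_monotone _ hMN

lemma sublevelCount_le_of_lt (hW : Monotone W) {x n : ℕ} (hn : x < W n) (N : ℕ) :
    sublevelCount W x N ≤ n := by
  rcases le_or_gt N n with hN | hN
  · exact (Nat.count_le _).trans hN
  obtain ⟨b, rfl⟩ := Nat.exists_eq_add_of_le hN.le
  have hnone : Nat.count (fun k => W (n + k) ≤ x) b = 0 :=
    Nat.count_iff_forall_not.mpr fun k _ hk => (hn.trans_le (hW (n.le_add_right k))).not_ge hk
  rw [sublevelCount, Nat.count_add, hnone, add_zero]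
  exact Nat.count_le _

lemma le_of_lt_sublevelCount (hW : Monotone W) {x N k : ℕ} (hk : k < sublevelCount W x N) :
    W k ≤ x :=
  le_of_not_gt fun h => (sublevelCount_le_of_lt hW h N).not_gt hk

lemma computable₂_sublevelCount (hW : Computable W) : Computable₂ (sublevelCount W) := by
  have hstep : Computable₂ fun (a : ℕ × ℕ) (p : ℕ × ℕ) => p.2 + if W p.1 ≤ a.1 then 1 else 0 :=
    Computable.of_eq ((Primrec₂.to_comp Primrec.nat_add).comp (Computable.snd.comp Computable.snd)
      (Computable.cond ((Primrec₂.to_comp Primrec.nat_le.decide).comp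
          (hW.comp (Computable.fst.comp Computable.snd)) (Computable.fst.comp Computable.fst))
        (Computable.const 1) (Computable.const 0))) fun _ => by
      simp only [Bool.cond_decide]
  refine Computable.of_eq (Computable.nat_rec Computable.snd (Computable.const 0) hstep)
    fun ⟨x, N⟩ => ?_
  induction N with
  | zero => simp [sublevelCount]
  | succ N ih => simp only [sublevelCount, Nat.count_succ] at ih ⊢; rw [← ih]

end SublevelCount

namespace IsOrder

variable {h : ℕ → ℕ}

lemma exists_isOrder_le_of_lt_apply {v : ℕ → ℕ} (hv : Computable v) (hh : IsOrder h) :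
    ∃ g, IsOrder g ∧ ∀ n m, m < v n → g m ≤ h n := by
  obtain ⟨hhc, hhm, hhu⟩ := hh
  set W := partialSups v
  -- `sublevelCount W m m` is the least `n` with `m < W n`, if that is at most `m`
  refine ⟨fun m => h (sublevelCount W m m), ⟨?_, ?_, fun M => ?_⟩, fun n m hm => ?_⟩
  · exact hhc.comp ((computable₂_sublevelCount (computable_partialSups hv)).comp
      Computable.id Computable.id)
  · exact hhm.comp fun m m' hm => sublevelCount_mono hm hm
  · obtain ⟨n, hn⟩ := hhu M
    have hW : ∀ k < n, W k ≤ max n (W n) := fun k hk => (W.monotone hk.le).trans (le_max_right _ _)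
    exact ⟨max n (W n), hn.trans (hhm (le_sublevelCount hW (le_max_left _ _)))⟩
  · exact hhm (sublevelCount_le_of_lt W.monotone (hm.trans_le (le_partialSups v n)) m)

lemma exists_isOrder_apply_le_of_lt {u : ℕ → ℕ} (hu : Computable u) (hh : IsOrder h) :
    ∃ g, IsOrder g ∧ ∀ n m, m < g n → u m ≤ h n := by
  obtain ⟨hhc, hhm, hhu⟩ := hh
  set W := partialSups u
  refine ⟨fun n => sublevelCount W (h n) n, ⟨?_, ?_, fun M => ?_⟩, fun n m hm => ?_⟩
  · exact (computable₂_sublevelCount (computable_partialSups hu)).comp hhc Computable.id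
  · exact fun n n' hn => sublevelCount_mono (hhm hn) hn
  · obtain ⟨n, hn⟩ := hhu (W M)
    have hW : ∀ k < M, W k ≤ h (max M n) :=
      fun k hk => (W.monotone hk.le).trans (hn.trans (hhm (le_max_right _ _)))
    exact ⟨max M n, le_sublevelCount hW (le_max_left _ _)⟩
  · exact (le_partialSups u m).trans (le_of_lt_sublevelCount W.monotone hm)

end IsOrder

theorem stmt6 (A E B : ℕ → Bool) :
    (SWttRed A E → TtuRed E B → TtuRed A B) ∧
      (TtuRed A E → SWttRed E B → TtuRed A B) := by
  constructor
  · rintro ⟨v, hv, hAE⟩ hEB h hh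
    obtain ⟨g, hg, hgh⟩ := hh.exists_isOrder_le_of_lt_apply hv
    exact hAE.comp hv (hEB g hg) hgh
  · rintro hAE ⟨u, hu, hEB⟩ h hh
    obtain ⟨g, hg, hgh⟩ := hh.exists_isOrder_apply_le_of_lt hu
    exact (hAE g hg).comp hg.1 hEB hgh
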